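/- For every λ ∈ (0,1), all ε, r > 0, every real a > 0 and every real b > 1, there exist t₀ > 0 and smooth functions β, γ : [0, t₀] → (0, ∞) satisfying the differential inequalities −a·γ''(t)/γ(t) − b·β''(t)/β(t) > 0 and −β''(t)/β(t) + (b−1)·(1 − β'(t)²)/β(t)² − a·γ'(t)·β'(t)/(γ(t)·β(t)) > 0 for all t ∈ [0, t₀], together with the boundary conditions γ(0) = 1, β(0) = r, γ'(0) ≤ ε, β'(0) = 0, γ'(t₀) ≥ 0 and β'(t₀) ≥ λ. -/

import Mathlib

/-!
With `x = τ + t`, take `γ = (x/τ)^μ` and `β` a combination of `(x/τ)^p` and `(x/τ)^(1-p)`, so that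
`γ''/γ = -μ(1-μ)/x²` and `β''/β = p(p-1)/x²`. For small `μ ∈ (0,1)` and `p > 1` close to `1` the
first inequality holds everywhere, and the second holds wherever `0 ≤ β' ≤ λ` and `β ≤ λx`.
Since `β'` increases from `0` to `∞`, stop at the time `t₀` with `β'(t₀) = λ`; then `β ≤ λx` on
`[0, t₀]` because `β(0) = r ≤ λτ`. Taking `τ` large also makes `γ'(0) = μ/τ ≤ ε`.
-/

open Real Set Filter Topology
open scoped ContDiff

noncomputable section

namespace WarpingFunctions

variable {τ q t : ℝ}

def shift (τ t : ℝ) : ℝ := τ + smoothTransition (4 * t / τ + 2) * t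

lemma contDiff_shift (τ : ℝ) : ContDiff ℝ ∞ (shift τ) :=
  contDiff_const.add <| (smoothTransition.contDiff.comp
    (((contDiff_const.mul contDiff_id).div_const τ).add contDiff_const)).mul contDiff_id

lemma shift_pos (hτ : 0 < τ) (t : ℝ) : 0 < shift τ t := by
  have h0 := smoothTransition.nonneg (4 * t / τ + 2)
  have h1 := smoothTransition.le_one (4 * t / τ + 2)
  rcases le_or_gt t (-(τ / 2)) with ht | ht
  · rw [shift, smoothTransition.zero_of_nonpos]
    · simpa using hτ
    · rw [div_add' _ _ _ hτ.ne']
      exact div_nonpos_of_nonpos_of_nonneg (by linarith) hτ.le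
  · rcases le_or_gt t 0 with ht' | ht'
    · unfold shift
      nlinarith [mul_nonneg (sub_nonneg.2 h1) (neg_nonneg.2 ht')]
    · unfold shift
      positivity

lemma shift_eq (hτ : 0 < τ) (ht : -(τ / 4) ≤ t) : shift τ t = τ + t := by
  rw [shift, smoothTransition.one_of_one_le, one_mul]
  rw [div_add' _ _ _ hτ.ne', le_div_iff₀ hτ]
  linarith

lemma shift_eventuallyEq (hτ : 0 < τ) (ht : -(τ / 4) < t) : shift τ =ᶠ[𝓝 t] (τ + ·) :=
  eventually_of_mem (Ioi_mem_nhds ht) fun _ hu => shift_eq hτ (le_of_lt hu)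

def power (τ q t : ℝ) : ℝ := (shift τ t / τ) ^ q

lemma contDiff_power (hτ : 0 < τ) (q : ℝ) : ContDiff ℝ ∞ (power τ q) :=
  ((contDiff_shift τ).div_const τ).rpow_const_of_ne fun t => (div_pos (shift_pos hτ t) hτ).ne'

lemma power_pos (hτ : 0 < τ) (q t : ℝ) : 0 < power τ q t :=
  rpow_pos_of_pos (div_pos (shift_pos hτ t) hτ) q

lemma power_eq (hτ : 0 < τ) (ht : -(τ / 4) ≤ t) : power τ q t = ((τ + t) / τ) ^ q := by
  rw [power, shift_eq hτ ht]

lemma power_zero (hτ : 0 < τ) (q : ℝ) : power τ q 0 = 1 := by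
  rw [power_eq hτ (by linarith), add_zero, div_self hτ.ne', one_rpow]

lemma hasDerivAt_power (hτ : 0 < τ) (ht : -(τ / 4) < t) :
    HasDerivAt (power τ q) (q / (τ + t) * power τ q t) t := by
  have hx : τ + t ≠ 0 := by linarith
  have h := (((hasDerivAt_id' t).const_add τ).div_const τ).rpow_const (p := q)
    (Or.inl (div_ne_zero hx hτ.ne'))
  have hev : power τ q =ᶠ[𝓝 t] fun u => ((τ + u) / τ) ^ q :=
    (shift_eventuallyEq hτ ht).mono fun u hu => by simp only [power, hu]
  refine (h.congr_of_eventuallyEq hev).congr_deriv ?_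
  rw [power_eq hτ ht.le, rpow_sub_one (div_ne_zero hx hτ.ne')]
  field_simp

lemma deriv_power (hτ : 0 < τ) (ht : -(τ / 4) < t) :
    deriv (power τ q) t = q / (τ + t) * power τ q t :=
  (hasDerivAt_power hτ ht).deriv

lemma deriv_deriv_power (hτ : 0 < τ) (ht : -(τ / 4) < t) :
    deriv (deriv (power τ q)) t = q * (q - 1) / (τ + t) ^ 2 * power τ q t := by
  have hx : τ + t ≠ 0 := by linarith
  have hev : deriv (power τ q) =ᶠ[𝓝 t] fun u => q * (τ + u)⁻¹ * power τ q u :=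
    eventually_of_mem (Ioi_mem_nhds ht) fun u hu => by rw [deriv_power hτ hu, div_eq_mul_inv]
  rw [hev.deriv_eq]
  refine ((((hasDerivAt_id' t).const_add τ).inv hx).const_mul q |>.mul
    (hasDerivAt_power hτ ht)).deriv.trans ?_
  simp only [Pi.inv_apply]
  field_simp
  ring

lemma deriv_linearCombination {f g : ℝ → ℝ} (hf : Differentiable ℝ f) (hg : Differentiable ℝ g)
    (c α β : ℝ) :
    deriv (fun t => c * (α * f t + β * g t)) = fun t => c * (α * deriv f t + β * deriv g t) := by
  funext t
  exact ((((hf t).hasDerivAt.const_mul α).add ((hg t).hasDerivAt.const_mul β)).const_mul c).deriv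

variable {r p : ℝ}

/-- The exponents `p` and `1 - p` have the same `p (p - 1)`, so `β'' = p (p - 1) β / (τ + t)²`;
the coefficients give `β 0 = r` and `β' 0 = 0`. -/
def warp (τ r p t : ℝ) : ℝ := r / (2 * p - 1) * ((p - 1) * power τ p t + p * power τ (1 - p) t)

lemma contDiff_warp (hτ : 0 < τ) (r p : ℝ) : ContDiff ℝ ∞ (warp τ r p) :=
  contDiff_const.mul ((contDiff_const.mul (contDiff_power hτ p)).add
    (contDiff_const.mul (contDiff_power hτ (1 - p))))

lemma warp_pos (hτ : 0 < τ) (hr : 0 < r) (hp : 1 < p) (t : ℝ) : 0 < warp τ r p t := by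
  have := power_pos hτ p t
  have := power_pos hτ (1 - p) t
  have : 0 < 2 * p - 1 := by linarith
  have : 0 < p - 1 := by linarith
  unfold warp
  positivity

lemma warp_zero (hτ : 0 < τ) (hp : 1 < p) : warp τ r p 0 = r := by
  have : 2 * p - 1 ≠ 0 := by linarith
  rw [warp, power_zero hτ, power_zero hτ]
  field_simp
  ring

lemma deriv_warp_eq_fun (hτ : 0 < τ) : deriv (warp τ r p) =
    fun t => r / (2 * p - 1) * ((p - 1) * deriv (power τ p) t + p * deriv (power τ (1 - p)) t) :=
  deriv_linearCombination ((contDiff_power hτ p).differentiable (by simp))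
    ((contDiff_power hτ (1 - p)).differentiable (by simp)) _ _ _

lemma deriv_warp (hτ : 0 < τ) (ht : -(τ / 4) < t) : deriv (warp τ r p) t =
    r * p * (p - 1) / (2 * p - 1) / (τ + t) * (power τ p t - power τ (1 - p) t) := by
  rw [deriv_warp_eq_fun hτ]
  beta_reduce
  rw [deriv_power hτ ht, deriv_power hτ ht]
  ring

lemma deriv_warp_zero (hτ : 0 < τ) : deriv (warp τ r p) 0 = 0 := by
  rw [deriv_warp hτ (by linarith), power_zero hτ, power_zero hτ, sub_self, mul_zero]

lemma deriv_deriv_warp (hτ : 0 < τ) (ht : -(τ / 4) < t) :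
    deriv (deriv (warp τ r p)) t = p * (p - 1) / (τ + t) ^ 2 * warp τ r p t := by
  have hdiff : ∀ q, Differentiable ℝ (deriv (power τ q)) := fun q =>
    ((contDiff_power hτ q).iterate_deriv 1).differentiable (by simp)
  rw [deriv_warp_eq_fun hτ, deriv_linearCombination (hdiff p) (hdiff (1 - p))]
  beta_reduce
  rw [deriv_deriv_power hτ ht, deriv_deriv_power hτ ht, warp]
  ring

lemma monotoneOn_deriv_warp (hτ : 0 < τ) (hr : 0 < r) (hp : 1 < p) :
    MonotoneOn (deriv (warp τ r p)) (Ici 0) := by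
  have hcd := contDiff_warp hτ r p
  refine monotoneOn_of_deriv_nonneg (convex_Ici 0) (hcd.continuous_deriv (by simp)).continuousOn
    ((hcd.iterate_deriv 1).differentiable (by simp)).differentiableOn fun t ht => ?_
  rw [interior_Ici] at ht
  have := warp_pos hτ hr hp t
  have : 0 < p - 1 := by linarith
  rw [deriv_deriv_warp hτ (by linarith [ht.out])]
  positivity

lemma tendsto_deriv_warp_atTop (hτ : 0 < τ) (hr : 0 < r) (hp : 1 < p) :
    Tendsto (deriv (warp τ r p)) atTop atTop := by
  set K := r * p * (p - 1) / (2 * p - 1)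
  have hK : 0 < K := by
    have : 0 < 2 * p - 1 := by linarith
    have : 0 < p - 1 := by linarith
    positivity
  have hlower : ∀ t, 0 ≤ t →
      K / τ * (((τ + t) / τ) ^ (p - 1) - 1) ≤ deriv (warp τ r p) t := by
    intro t ht
    have hy : 1 ≤ (τ + t) / τ := by rw [le_div_iff₀ hτ]; linarith
    have hsplit : ((τ + t) / τ) ^ p = ((τ + t) / τ) ^ (p - 1) * ((τ + t) / τ) := by
      rw [← rpow_add_one (by positivity), sub_add_cancel]
    have hsmall : ((τ + t) / τ) ^ (1 - p) / ((τ + t) / τ) ≤ 1 :=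
      div_le_one_of_le₀ ((rpow_le_one_of_one_le_of_nonpos hy (by linarith)).trans hy)
        (by positivity)
    calc K / τ * (((τ + t) / τ) ^ (p - 1) - 1)
        ≤ K / τ * (((τ + t) / τ) ^ (p - 1) - ((τ + t) / τ) ^ (1 - p) / ((τ + t) / τ)) := by
          gcongr
      _ = deriv (warp τ r p) t := by
          rw [deriv_warp hτ (by linarith), power_eq hτ (by linarith), power_eq hτ (by linarith),
            hsplit]
          field_simp
          ring
  refine tendsto_atTop_mono' _ (eventually_ge_atTop 0 |>.mono hlower) ?_
  refine Tendsto.const_mul_atTop (by positivity) (tendsto_atTop_add_const_right _ _ ?_)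
  exact (tendsto_rpow_atTop (by linarith)).comp
    ((tendsto_atTop_add_const_left _ τ tendsto_id).atTop_div_const hτ)

lemma exists_pos_apply_eq_mapsTo_Icc {g : ℝ → ℝ} {lam : ℝ} (hg : Continuous g)
    (hmono : MonotoneOn g (Ici 0)) (h0 : g 0 = 0) (hlam : 0 < lam)
    (htop : Tendsto g atTop atTop) :
    ∃ t₀, 0 < t₀ ∧ g t₀ = lam ∧ MapsTo g (Icc 0 t₀) (Icc 0 lam) := by
  obtain ⟨T, hT, hT0⟩ := ((htop.eventually_ge_atTop lam).and (eventually_ge_atTop 0)).exists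
  obtain ⟨t₀, ht₀, hgt₀⟩ := intermediate_value_Icc hT0 hg.continuousOn ⟨h0.symm ▸ hlam.le, hT⟩
  have ht₀pos : 0 < t₀ := ht₀.1.lt_of_ne (by rintro rfl; linarith)
  refine ⟨t₀, ht₀pos, hgt₀, fun t ht => ⟨?_, ?_⟩⟩
  · exact h0 ▸ hmono self_mem_Ici ht.1 ht.1
  · exact hgt₀ ▸ hmono ht.1 ht₀.1 ht.2

lemma exists_exponents {a b c L : ℝ} (ha : 0 < a) (hc : 0 < c) :
    ∃ μ p, 0 < μ ∧ μ < 1 ∧ 1 < p ∧ b * (p * (p - 1)) < a * (μ * (1 - μ)) ∧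
      (a * μ + p * (p - 1)) * L < c := by
  obtain ⟨μ, ⟨hμc, hμ1⟩, hμ0⟩ : ∃ μ, (a * μ * L < c ∧ μ < 1) ∧ 0 < μ :=
    (((ContinuousAt.eventually_lt (by fun_prop) (by fun_prop) (by simpa using hc)).and
      (eventually_lt_nhds one_pos)).filter_mono nhdsWithin_le_nhds).and
      self_mem_nhdsWithin |>.exists (f := 𝓝[>] (0 : ℝ))
  have hμ : 0 < a * (μ * (1 - μ)) := mul_pos ha (mul_pos hμ0 (by linarith))
  obtain ⟨p, ⟨hpb, hpc⟩, hp⟩ : ∃ p, (b * (p * (p - 1)) < a * (μ * (1 - μ)) ∧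
      (a * μ + p * (p - 1)) * L < c) ∧ 1 < p :=
    (((ContinuousAt.eventually_lt (by fun_prop) (by fun_prop) (by simpa using hμ)).and
      (ContinuousAt.eventually_lt (by fun_prop) (by fun_prop) (by simpa using hμc))).filter_mono
      nhdsWithin_le_nhds).and self_mem_nhdsWithin |>.exists (f := 𝓝[>] (1 : ℝ))
  exact ⟨μ, p, hμ0, hμ1, hp, hpb, hpc⟩

lemma ricci_radial_pos {a b μ k x G B : ℝ} (hx : 0 < x) (hG : 0 < G) (hB : 0 < B)
    (h : b * k < a * (μ * (1 - μ))) :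
    0 < -a * (μ * (μ - 1) / x ^ 2 * G) / G - b * (k / x ^ 2 * B) / B := by
  have : -a * (μ * (μ - 1) / x ^ 2 * G) / G - b * (k / x ^ 2 * B) / B =
      (a * (μ * (1 - μ)) - b * k) / x ^ 2 := by
    field_simp
    ring
  rw [this]
  exact div_pos (by linarith) (by positivity)

lemma ricci_tangential_pos {a b μ k lam x v G B : ℝ} (ha : 0 ≤ a) (hb : 1 ≤ b) (hμ : 0 ≤ μ)
    (hk : 0 ≤ k) (hx : 0 < x) (hG : 0 < G) (hB : 0 < B) (hv : v ∈ Icc 0 lam)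
    (hBx : B ≤ lam * x) (h : (a * μ + k) * lam ^ 2 < (b - 1) * (1 - lam ^ 2)) :
    0 < -(k / x ^ 2 * B) / B + (b - 1) * (1 - v ^ 2) / B ^ 2 - a * (μ / x * G * v) / (G * B) := by
  obtain ⟨hv0, hvlam⟩ := hv
  have : -(k / x ^ 2 * B) / B + (b - 1) * (1 - v ^ 2) / B ^ 2 - a * (μ / x * G * v) / (G * B) =
      ((b - 1) * (1 - v ^ 2) * x ^ 2 - a * μ * (v * B) * x - k * B ^ 2) / (x ^ 2 * B ^ 2) := by
    field_simp
    ring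
  rw [this]
  refine div_pos ?_ (by positivity)
  have hvv : v ^ 2 ≤ lam ^ 2 := pow_le_pow_left₀ hv0 hvlam 2
  have hvB : v * B ≤ lam * (lam * x) := mul_le_mul hvlam hBx hB.le (hv0.trans hvlam)
  have hBB : B ^ 2 ≤ (lam * x) ^ 2 := pow_le_pow_left₀ hB.le hBx 2
  have hx2 : 0 < x ^ 2 := by positivity
  nlinarith [mul_le_mul_of_nonneg_left hvv (mul_nonneg (sub_nonneg.2 hb) hx2.le),
    mul_le_mul_of_nonneg_left hvB (mul_nonneg (mul_nonneg ha hμ) hx.le),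
    mul_le_mul_of_nonneg_left hBB hk, mul_lt_mul_of_pos_right h hx2]

end WarpingFunctions

end

open WarpingFunctions

theorem warping_functions_exist (lam ε r a b : ℝ) (hlam : lam ∈ Set.Ioo (0:ℝ) 1)
    (hε : 0 < ε) (hr : 0 < r) (ha : 0 < a) (hb : 1 < b) :
    ∃ t₀ : ℝ, 0 < t₀ ∧ ∃ β γ : ℝ → ℝ,
      ContDiff ℝ (⊤ : ℕ∞) β ∧ ContDiff ℝ (⊤ : ℕ∞) γ ∧
      (∀ t ∈ Set.Icc 0 t₀, 0 < β t) ∧ (∀ t ∈ Set.Icc 0 t₀, 0 < γ t) ∧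
      (∀ t ∈ Set.Icc 0 t₀,
        0 < -a * deriv (deriv γ) t / γ t - b * deriv (deriv β) t / β t) ∧
      (∀ t ∈ Set.Icc 0 t₀,
        0 < -(deriv (deriv β) t) / β t + (b - 1) * (1 - (deriv β t) ^ 2) / (β t) ^ 2
            - a * (deriv γ t * deriv β t) / (γ t * β t)) ∧
      γ 0 = 1 ∧ β 0 = r ∧ deriv γ 0 ≤ ε ∧ deriv β 0 = 0 ∧
      0 ≤ deriv γ t₀ ∧ lam ≤ deriv β t₀ := by
  obtain ⟨hlam0, hlam1⟩ := hlam
  obtain ⟨μ, p, hμ0, hμ1, hp, hradial, htangential⟩ :=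
    exists_exponents (b := b) (c := (b - 1) * (1 - lam ^ 2)) (L := lam ^ 2) ha
      (mul_pos (by linarith) (by nlinarith))
  set τ := max (r / lam) (μ / ε)
  have hτ : 0 < τ := lt_max_of_lt_left (div_pos hr hlam0)
  have hrτ : r ≤ lam * τ := (div_le_iff₀' hlam0).1 (le_max_left _ _)
  have hμτ : μ / τ ≤ ε := (div_le_iff₀ hτ).2 ((div_le_iff₀' hε).1 (le_max_right _ _))
  have hreg : ∀ t, 0 ≤ t → -(τ / 4) < t := fun t ht => by linarith
  have hβ := contDiff_warp hτ r p
  obtain ⟨t₀, ht₀, hβ't₀, hβ'⟩ := exists_pos_apply_eq_mapsTo_Icc (hβ.continuous_deriv (by simp))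
    (monotoneOn_deriv_warp hτ hr hp) (deriv_warp_zero hτ) hlam0 (tendsto_deriv_warp_atTop hτ hr hp)
  have hβle : ∀ t ∈ Icc 0 t₀, warp τ r p t ≤ lam * (τ + t) := fun t ht => by
    have := (convex_Icc 0 t₀).image_sub_le_mul_sub_of_deriv_le hβ.continuous.continuousOn
      (hβ.differentiable (by simp)).differentiableOn (fun s hs => (hβ' (interior_subset hs)).2)
      0 (left_mem_Icc.2 ht₀.le) t ht ht.1
    rw [warp_zero hτ hp] at this
    linarith
  refine ⟨t₀, ht₀, warp τ r p, power τ μ, hβ, contDiff_power hτ μ, fun t _ => warp_pos hτ hr hp t,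
    fun t _ => power_pos hτ μ t, fun t ht => ?_, fun t ht => ?_, power_zero hτ μ, warp_zero hτ hp,
    ?_, deriv_warp_zero hτ, ?_, hβ't₀.ge⟩
  · rw [deriv_deriv_power hτ (hreg t ht.1), deriv_deriv_warp hτ (hreg t ht.1)]
    exact ricci_radial_pos (by linarith [ht.1]) (power_pos hτ μ t) (warp_pos hτ hr hp t) hradial
  · rw [deriv_deriv_warp hτ (hreg t ht.1), deriv_power hτ (hreg t ht.1)]
    exact ricci_tangential_pos ha.le hb.le hμ0.le (by nlinarith) (by linarith [ht.1])
      (power_pos hτ μ t) (warp_pos hτ hr hp t) (hβ' ht) (hβle t ht) htangential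
  · rw [deriv_power hτ (hreg 0 le_rfl), power_zero hτ, add_zero, mul_one]
    exact hμτ
  · have := power_pos hτ μ t₀
    rw [deriv_power hτ (hreg t₀ ht₀.le)]
    positivity
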